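/- Let k be a key, sm a zip tree all of whose keys are smaller than k, and bg a zip tree all of whose keys are larger than k. Then zip k sm bg is a zip tree with rk (zip k sm bg) = max(rk sm, rk bg) and set (zip k sm bg) = set sm ∪ set bg. -/

import Mathlib

/-- Ranked binary trees: each node stores a natural-number rank and a key. -/
inductive ZTree (α : Type*) where
  | empty : ZTree α
  | node (rank : ℕ) (key : α) (left right : ZTree α) : ZTree α

namespace ZTree

/-- The rank of the root of a tree, with `rk empty = -1`. -/
def rk {α : Type*} : ZTree α → ℤ
  | .empty => -1
  | .node r _ _ _ => (r : ℤ)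

/-- The set of keys occurring in a tree. -/
def keys {α : Type*} : ZTree α → Set α
  | .empty => ∅
  | .node _ k l r => {k} ∪ l.keys ∪ r.keys

/-- The left child of a tree (the empty tree for the empty tree). -/
def left {α : Type*} : ZTree α → ZTree α
  | .empty => .empty
  | .node _ _ l _ => l

/-- The right child of a tree (the empty tree for the empty tree). -/
def right {α : Type*} : ZTree α → ZTree α
  | .empty => .empty
  | .node _ _ _ r => r

/-- The number of nodes of a tree. -/
def size {α : Type*} : ZTree α → ℕ
  | .empty => 0
  | .node _ _ l r => l.size + r.size + 1

/-- The zip tree invariant: binary-search-tree property on keys, the rank of a left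
child is strictly smaller than the rank of its parent, and the rank of a right child
is at most the rank of its parent. -/
def IsZipTree {α : Type*} [LinearOrder α] : ZTree α → Prop
  | .empty => True
  | .node rank k l r =>
      (∀ x ∈ l.keys, x < k) ∧ (∀ x ∈ r.keys, k < x) ∧
      l.rk < (rank : ℤ) ∧ r.rk ≤ (rank : ℤ) ∧ l.IsZipTree ∧ r.IsZipTree

/-- Zip-tree insertion. -/
def insert {α : Type*} [LinearOrder α] (r : ℕ) (k : α) : ZTree α → ZTree α
  | .empty => .node r k .empty .empty
  | .node rank key l rt =>
    if k = key then .node rank key l rt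
    else if k < key then
      match ZTree.insert r k l with
      | .empty => .node rank key .empty rt
      | .node tr tk tl trr =>
          if (tr : ℤ) < (rank : ℤ) then .node rank key (.node tr tk tl trr) rt
          else .node tr tk tl (.node rank key trr rt)
    else
      match ZTree.insert r k rt with
      | .empty => .node rank key l .empty
      | .node tr tk tl trr =>
          if (tr : ℤ) ≤ (rank : ℤ) then .node rank key l (.node tr tk tl trr)
          else .node tr tk (.node rank key l tl) trr

/-- Zipping two trees. -/
def zip {α : Type*} (k : α) : ZTree α → ZTree α → ZTree α
  | .empty, .empty => .empty
  | .empty, t => t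
  | t, .empty => t
  | .node r1 k1 l1 rt1, .node r2 k2 l2 rt2 =>
    if r1 < r2 then
      .node r2 k2 (ZTree.zip k (.node r1 k1 l1 rt1) l2) rt2
    else
      .node r1 k1 l1 (ZTree.zip k rt1 (.node r2 k2 l2 rt2))
  termination_by t1 t2 => t1.size + t2.size
  decreasing_by
    · simp [ZTree.size]
    · simp [ZTree.size]

/-- Zip-tree deletion. -/
def delete {α : Type*} [LinearOrder α] (k : α) : ZTree α → ZTree α
  | .empty => .empty
  | .node rank key l r =>
    if k < key then .node rank key (ZTree.delete k l) r
    else if key < k then .node rank key l (ZTree.delete k r)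
    else ZTree.zip k l r

end ZTree

/-! Rank and key set of `zip` are computed along its recursion without any invariant. The invariant
survives because each recursive call produces a subtree whose root rank is the maximum of two ranks
already bounded by the parent's, and whose keys stay on the parent's side: every key of `sm` lies
below every key of `bg`. -/

namespace ZTree

variable {α : Type*} (k : α)

@[simp]
theorem zip_empty_left (t : ZTree α) : zip k .empty t = t := by
  cases t <;> simp [zip]

@[simp]
theorem zip_empty_right (t : ZTree α) : zip k t .empty = t := by
  cases t <;> simp [zip]

theorem zip_node_node (r₁ r₂ : ℕ) (k₁ k₂ : α) (l₁ t₁ l₂ t₂ : ZTree α) :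
    zip k (.node r₁ k₁ l₁ t₁) (.node r₂ k₂ l₂ t₂) =
      if r₁ < r₂ then .node r₂ k₂ (zip k (.node r₁ k₁ l₁ t₁) l₂) t₂
      else .node r₁ k₁ l₁ (zip k t₁ (.node r₂ k₂ l₂ t₂)) := by
  rw [zip]

theorem keys_zip (s t : ZTree α) : (zip k s t).keys = s.keys ∪ t.keys := by
  induction s, t using zip.induct with
  | case1 | case2 | case3 => simp [keys]
  | case4 r₁ k₁ l₁ t₁ r₂ k₂ l₂ t₂ hlt ih =>
    rw [zip_node_node, if_pos hlt, keys, ih, keys, keys]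
    ac_rfl
  | case5 r₁ k₁ l₁ t₁ r₂ k₂ l₂ t₂ hle ih =>
    rw [zip_node_node, if_neg hle, keys, ih, keys, keys]
    ac_rfl

theorem neg_one_le_rk (t : ZTree α) : -1 ≤ t.rk := by
  cases t <;> simp [rk]

theorem rk_zip (s t : ZTree α) : (zip k s t).rk = max s.rk t.rk := by
  induction s, t using zip.induct with
  | case1 | case2 | case3 => simp [rk.eq_1, neg_one_le_rk]
  | case4 r₁ k₁ l₁ t₁ r₂ k₂ l₂ t₂ hlt =>
    rw [zip_node_node, if_pos hlt]
    simp [rk, hlt.le]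
  | case5 r₁ k₁ l₁ t₁ r₂ k₂ l₂ t₂ hle =>
    rw [zip_node_node, if_neg hle]
    simp [rk, not_lt.mp hle]

theorem isZipTree_zip [LinearOrder α] {s t : ZTree α} (hs : s.IsZipTree) (ht : t.IsZipTree)
    (hst : ∀ x ∈ s.keys, ∀ y ∈ t.keys, x < y) : (zip k s t).IsZipTree := by
  induction s, t using zip.induct with
  | case1 | case2 => simpa using ht
  | case3 => simpa using hs
  | case4 r₁ k₁ l₁ t₁ r₂ k₂ l₂ t₂ hlt ih =>
    obtain ⟨hl₂, ht₂, hrl₂, hrt₂, hzl₂, hzt₂⟩ := ht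
    rw [zip_node_node, if_pos hlt]
    refine ⟨?_, ht₂, ?_, hrt₂, ih hs hzl₂ fun x hx y hy => hst x hx y ?_, hzt₂⟩
    · simp only [keys_zip, Set.mem_union]
      rintro x (hx | hx)
      exacts [hst x hx k₂ (by simp [keys]), hl₂ x hx]
    · rw [rk_zip, rk]
      exact max_lt (by exact_mod_cast hlt) hrl₂
    · simp [keys, hy]
  | case5 r₁ k₁ l₁ t₁ r₂ k₂ l₂ t₂ hle ih =>
    obtain ⟨hl₁, ht₁, hrl₁, hrt₁, hzl₁, hzt₁⟩ := hs
    rw [zip_node_node, if_neg hle]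
    refine ⟨hl₁, ?_, hrl₁, ?_, hzl₁, ih hzt₁ ht fun x hx y hy => hst x ?_ y hy⟩
    · simp only [keys_zip, Set.mem_union]
      rintro x (hx | hx)
      exacts [ht₁ x hx, hst k₁ (by simp [keys]) x hx]
    · rw [rk_zip, rk]
      exact max_le hrt₁ (by exact_mod_cast not_lt.mp hle)
    · simp [keys, hx]

end ZTree

theorem zip_correct {α : Type*} [LinearOrder α] (k : α) (sm bg : ZTree α)
    (hsm : sm.IsZipTree) (hbg : bg.IsZipTree)
    (hsmk : ∀ x ∈ sm.keys, x < k) (hbgk : ∀ x ∈ bg.keys, k < x) :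
    (ZTree.zip k sm bg).IsZipTree ∧
    (ZTree.zip k sm bg).rk = max sm.rk bg.rk ∧
    (ZTree.zip k sm bg).keys = sm.keys ∪ bg.keys := by
  refine ⟨ZTree.isZipTree_zip k hsm hbg ?_, ZTree.rk_zip k sm bg, ZTree.keys_zip k sm bg⟩
  exact fun x hx y hy => (hsmk x hx).trans (hbgk y hy)
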